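/- Let κ > 0 and τ ≠ 0, and set λ(x,y) = (1 + (κ/4)(x²+y²))⁻¹. The composition of the Hopf fibration with the covering map Θ depends only on (x,y) and is given explicitly by π(Θ(x,y,z)) = (λ(x,y)·(y + i·x), λ(x,y)·((κ/4)(x²+y²) − 1)/√κ) for all (x,y,z) ∈ ℝ³. In particular Θ maps each vertical line {(x,y)} × ℝ into a single Hopf fiber. -/

import Mathlib

/-!
The Hopf map is invariant under the diagonal action of the unit circle, `(a, b) ↦ (a e, b e)`
with `‖e‖ = 1`, and homogeneous of degree two under real scaling. Since
`Θ(x,y,z) = r · ((√κ/2)(y+ix), 1) · e^{iκz/(4τ)}` with `r = (1 + (κ/4)(x²+y²))^{-1/2}`,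
the phase drops out, `r²` is the factor `λ(x,y)`, and what remains is `π((√κ/2)(y+ix), 1)`.
-/

/-- The Hopf fibration `π : ℂ² → ℂ × ℝ` associated with `κ > 0`,
`π(z,w) = ((2/√κ)·z·conj(w), (|z|² − |w|²)/√κ)`. -/
noncomputable def hopf (κ : ℝ) (p : ℂ × ℂ) : ℂ × ℝ :=
  (((2 / Real.sqrt κ : ℝ) : ℂ) * (p.1 * (starRingEnd ℂ) p.2),
    (‖p.1‖ ^ 2 - ‖p.2‖ ^ 2) / Real.sqrt κ)

/-- The conformal factor of the Cartan model, `λ(x,y) = (1 + (κ/4)(x²+y²))⁻¹`. -/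
noncomputable def lam (κ x y : ℝ) : ℝ := (1 + κ / 4 * (x ^ 2 + y ^ 2))⁻¹

/-- The covering map `Θ : ℝ³ → ℂ²` onto the Berger sphere minus a fiber,
`Θ(x,y,z) = (1 + (κ/4)(x²+y²))^{−1/2} ((√κ/2)(y+ix)e^{iκz/(4τ)}, e^{iκz/(4τ)})`. -/
noncomputable def ThetaBerger (κ τ : ℝ) (p : ℝ × ℝ × ℝ) : ℂ × ℂ :=
  (((Real.sqrt (1 + κ / 4 * (p.1 ^ 2 + p.2.1 ^ 2)))⁻¹ : ℂ) *
      (((Real.sqrt κ / 2 : ℝ) : ℂ) * ((p.2.1 : ℂ) + (p.1 : ℂ) * Complex.I)) *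
      Complex.exp (Complex.I * ((κ * p.2.2 / (4 * τ) : ℝ) : ℂ)),
   ((Real.sqrt (1 + κ / 4 * (p.1 ^ 2 + p.2.1 ^ 2)))⁻¹ : ℂ) *
      Complex.exp (Complex.I * ((κ * p.2.2 / (4 * τ) : ℝ) : ℂ)))

theorem hopf_mul_of_norm_eq_one (κ : ℝ) (a b : ℂ) {e : ℂ} (he : ‖e‖ = 1) :
    hopf κ (a * e, b * e) = hopf κ (a, b) := by
  have he_conj : e * starRingEnd ℂ e = 1 := by
    rw [Complex.mul_conj, Complex.normSq_eq_norm_sq, he]; norm_num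
  simp only [hopf, map_mul, norm_mul, he, mul_one, Prod.mk.injEq, and_true]
  linear_combination ((2 / Real.sqrt κ : ℝ) : ℂ) * a * starRingEnd ℂ b * he_conj

theorem hopf_ofReal_mul (κ c : ℝ) (a b : ℂ) :
    hopf κ ((c : ℂ) * a, (c : ℂ) * b) = c ^ 2 • hopf κ (a, b) := by
  simp only [hopf, map_mul, Complex.conj_ofReal, norm_mul, Complex.norm_real, Real.norm_eq_abs,
    mul_pow, sq_abs, Prod.smul_mk, Complex.real_smul, smul_eq_mul, Prod.mk.injEq]
  constructor
  · push_cast; ring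
  · ring

theorem hopf_half_sqrt_mul_one {κ : ℝ} (hκ : 0 < κ) (w : ℂ) :
    hopf κ (((Real.sqrt κ / 2 : ℝ) : ℂ) * w, 1) = (w, (κ / 4 * ‖w‖ ^ 2 - 1) / Real.sqrt κ) := by
  have hsqrt : 2 / Real.sqrt κ * (Real.sqrt κ / 2) = 1 := by field_simp
  simp only [hopf, map_one, mul_one, norm_mul, Complex.norm_real, Real.norm_eq_abs, norm_one,
    mul_pow, sq_abs, div_pow, Real.sq_sqrt hκ.le, Prod.mk.injEq, ← mul_assoc, ← Complex.ofReal_mul,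
    hsqrt, Complex.ofReal_one, one_mul, true_and]
  ring

theorem hopf_comp_thetaBerger_general (κ τ : ℝ) (hκ : 0 < κ) (x y z : ℝ) :
    hopf κ (ThetaBerger κ τ (x, y, z)) =
      (((lam κ x y : ℝ) : ℂ) * ((y : ℂ) + (x : ℂ) * Complex.I),
        lam κ x y * (κ / 4 * (x ^ 2 + y ^ 2) - 1) / Real.sqrt κ) := by
  set r := (Real.sqrt (1 + κ / 4 * (x ^ 2 + y ^ 2)))⁻¹
  set t := κ * z / (4 * τ)
  have hr : r ^ 2 = lam κ x y := by
    rw [inv_pow, Real.sq_sqrt (by positivity), lam]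
  have hΘ : ThetaBerger κ τ (x, y, z) =
      ((r : ℂ) * (((Real.sqrt κ / 2 : ℝ) : ℂ) * ((y : ℂ) + (x : ℂ) * Complex.I)) *
          Complex.exp (Complex.I * t), (r : ℂ) * 1 * Complex.exp (Complex.I * t)) := by
    simp [ThetaBerger, r, t]
  have hnorm : ‖(y : ℂ) + (x : ℂ) * Complex.I‖ ^ 2 = x ^ 2 + y ^ 2 := by
    rw [Complex.sq_norm, Complex.normSq_add_mul_I, add_comm]
  rw [hΘ, hopf_mul_of_norm_eq_one _ _ _ (Complex.norm_exp_I_mul_ofReal t), hopf_ofReal_mul,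
    hopf_half_sqrt_mul_one hκ, hnorm, hr, Prod.smul_mk, Complex.real_smul, smul_eq_mul,
    mul_div_assoc]

/-- The composition of the Hopf fibration with `Θ` depends only on `(x,y)`:
`π(Θ(x,y,z)) = (λ(x,y)(y+ix), λ(x,y)((κ/4)(x²+y²) − 1)/√κ)`. In particular `Θ`
maps each vertical line into a single Hopf fiber. -/
theorem hopf_comp_thetaBerger (κ τ : ℝ) (hκ : 0 < κ) (hτ : τ ≠ 0) (x y z : ℝ) :
    hopf κ (ThetaBerger κ τ (x, y, z)) =
      (((lam κ x y : ℝ) : ℂ) * ((y : ℂ) + (x : ℂ) * Complex.I),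
        lam κ x y * (κ / 4 * (x ^ 2 + y ^ 2) - 1) / Real.sqrt κ) :=
  hopf_comp_thetaBerger_general κ τ hκ x y z
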